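/- Let μ ∈ (0,1) and suppose r ∈ (0,1], ν* ∈ [0,1], β ∈ [0,1] satisfy β = 1/(2ν* + r + 1/r + 2) and r(ν*)² + (2r + 3 − 2μ)ν* − μ(r + 1/r + 2) = 0. Then the discrete distribution P* on [0,1]² assigning probability β/r to (rν*, rν*), probability β to each of (ν*, rν*) and (rν*, ν*), probability βr to (ν*, ν*), and probability βν* to each of (1, rν*) and (rν*, 1) is a probability measure on [0,1]² whose two coordinate marginals each have mean μ; i.e., P* belongs to the two-agent ambiguity set P_{(μ,μ)}. -/
import Mathlib


open MeasureTheory Set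

noncomputable section

/-- The square `[0,1]²`. -/
def square : Set (ℝ × ℝ) := {ν | ν.1 ∈ Set.Icc (0:ℝ) 1 ∧ ν.2 ∈ Set.Icc (0:ℝ) 1}

/-- Membership in the two-agent first-moment ambiguity set `P_{(μ,μ)}`: Borel probability
measures on `[0,1]²` whose coordinate marginals each have mean `μ`. -/
def MemAmb2 (μ : ℝ) (P : Measure (ℝ × ℝ)) : Prop :=
  (IsProbabilityMeasure P ∧ P squareᶜ = 0) ∧
  (∫ ν, ν.1 ∂P = μ) ∧ (∫ ν, ν.2 ∂P = μ)

/-- The two-agent worst-case candidate distribution built from parameters `r`, `ν*`, `β`. -/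
def P2 (r νs β : ℝ) : Measure (ℝ × ℝ) :=
  ENNReal.ofReal (β/r) • Measure.dirac (r*νs, r*νs)
    + ENNReal.ofReal β • Measure.dirac (νs, r*νs)
    + ENNReal.ofReal β • Measure.dirac (r*νs, νs)
    + ENNReal.ofReal (β*r) • Measure.dirac (νs, νs)
    + ENNReal.ofReal (β*νs) • Measure.dirac (1, r*νs)
    + ENNReal.ofReal (β*νs) • Measure.dirac (r*νs, 1)

lemma integrable_smul_dirac (f : ℝ × ℝ → ℝ) (hf : StronglyMeasurable f)
    (a : ℝ × ℝ) (c : ℝ) :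
    Integrable f (ENNReal.ofReal c • Measure.dirac a) := by
  refine Integrable.smul_measure ?_ ENNReal.ofReal_ne_top
  refine ⟨hf.aestronglyMeasurable, ?_⟩
  rw [HasFiniteIntegral, lintegral_dirac]
  exact ENNReal.coe_lt_top

lemma integral_smul_dirac (f : ℝ × ℝ → ℝ) (a : ℝ × ℝ) {c : ℝ} (hc : 0 ≤ c) :
    ∫ x, f x ∂(ENNReal.ofReal c • Measure.dirac a) = c * f a := by
  rw [integral_smul_measure, integral_dirac, ENNReal.toReal_ofReal hc, smul_eq_mul]

lemma integral_P2 (r νs β : ℝ) (hr : 0 < r) (hνs : 0 ≤ νs) (hβ : 0 ≤ β)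
    (f : ℝ × ℝ → ℝ) (hf : StronglyMeasurable f) :
    ∫ x, f x ∂(P2 r νs β) =
      (β/r) * f (r*νs, r*νs) + β * f (νs, r*νs) + β * f (r*νs, νs)
        + (β*r) * f (νs, νs) + (β*νs) * f (1, r*νs) + (β*νs) * f (r*νs, 1) := by
  have h1 : (0:ℝ) ≤ β/r := div_nonneg hβ hr.le
  have h2 : (0:ℝ) ≤ β*r := mul_nonneg hβ hr.le
  have h3 : (0:ℝ) ≤ β*νs := mul_nonneg hβ hνs
  have I : ∀ (a : ℝ × ℝ) (c : ℝ),
      Integrable f (ENNReal.ofReal c • Measure.dirac a) := integrable_smul_dirac f hf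
  rw [P2]
  rw [integral_add_measure (by exact (((((I _ _).add_measure (I _ _)).add_measure
      (I _ _)).add_measure (I _ _)).add_measure (I _ _))) (I _ _)]
  rw [integral_add_measure (by exact ((((I _ _).add_measure (I _ _)).add_measure
      (I _ _)).add_measure (I _ _))) (I _ _)]
  rw [integral_add_measure (by exact (((I _ _).add_measure (I _ _)).add_measure
      (I _ _))) (I _ _)]
  rw [integral_add_measure (by exact ((I _ _).add_measure (I _ _))) (I _ _)]
  rw [integral_add_measure (I _ _) (I _ _)]
  rw [integral_smul_dirac f _ h1, integral_smul_dirac f _ hβ, integral_smul_dirac f _ hβ,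
    integral_smul_dirac f _ h2, integral_smul_dirac f _ h3, integral_smul_dirac f _ h3]

/-- If `r ∈ (0,1]`, `ν* ∈ [0,1]`, `β ∈ [0,1]` satisfy
`β = 1/(2ν* + r + 1/r + 2)` and `r(ν*)² + (2r + 3 − 2μ)ν* − μ(r + 1/r + 2) = 0`, then the
discrete distribution `P*` described above is a probability measure on `[0,1]²` whose two
coordinate marginals each have mean `μ`; i.e. it belongs to `P_{(μ,μ)}`. -/
theorem two_agent_distribution_mem_ambiguity_set
    (μ r νs β : ℝ) (hμ : μ ∈ Set.Ioo (0:ℝ) 1)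
    (hr : r ∈ Set.Ioc (0:ℝ) 1) (hνs : νs ∈ Set.Icc (0:ℝ) 1) (hβ : β ∈ Set.Icc (0:ℝ) 1)
    (hβeq : β = 1/(2*νs + r + 1/r + 2))
    (hmean : r*νs^2 + (2*r + 3 - 2*μ)*νs - μ*(r + 1/r + 2) = 0) :
    MemAmb2 μ (P2 r νs β) := by
  obtain ⟨hr0, hr1⟩ := hr
  obtain ⟨hν0, hν1⟩ := hνs
  obtain ⟨hβ0, _⟩ := hβ
  have hrne : r ≠ 0 := ne_of_gt hr0
  have hD : 0 < 2*νs + r + 1/r + 2 := by positivity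
  have hDne : 2*νs + r + 1/r + 2 ≠ 0 := ne_of_gt hD
  have hrν0 : 0 ≤ r*νs := mul_nonneg hr0.le hν0
  have hrν1 : r*νs ≤ 1 := by nlinarith
  have hsum : β/r + β + β + β*r + β*νs + β*νs = 1 := by
    rw [hβeq]; field_simp; ring
  refine ⟨⟨?_, ?_⟩, ?_, ?_⟩
  · constructor
    rw [P2]
    simp only [Measure.add_apply, Measure.smul_apply, Measure.dirac_apply,
      Set.indicator_univ, Pi.one_apply, smul_eq_mul, mul_one]
    rw [← ENNReal.ofReal_add (div_nonneg hβ0 hr0.le) hβ0,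
      ← ENNReal.ofReal_add (by positivity) hβ0,
      ← ENNReal.ofReal_add (by positivity) (by positivity),
      ← ENNReal.ofReal_add (by positivity) (by positivity),
      ← ENNReal.ofReal_add (by positivity) (by positivity), hsum, ENNReal.ofReal_one]
  · have hmem : ∀ a b : ℝ, a ∈ Set.Icc (0:ℝ) 1 → b ∈ Set.Icc (0:ℝ) 1 →
        (a, b) ∉ squareᶜ := by
      intro a b ha hb h
      exact h ⟨ha, hb⟩
    rw [P2]
    simp only [Measure.add_apply, Measure.smul_apply, Measure.dirac_apply]
    rw [Set.indicator_of_notMem (hmem _ _ ⟨hrν0, hrν1⟩ ⟨hrν0, hrν1⟩),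
      Set.indicator_of_notMem (hmem _ _ ⟨hν0, hν1⟩ ⟨hrν0, hrν1⟩),
      Set.indicator_of_notMem (hmem _ _ ⟨hrν0, hrν1⟩ ⟨hν0, hν1⟩),
      Set.indicator_of_notMem (hmem _ _ ⟨hν0, hν1⟩ ⟨hν0, hν1⟩),
      Set.indicator_of_notMem (hmem _ _ ⟨zero_le_one, le_refl 1⟩ ⟨hrν0, hrν1⟩),
      Set.indicator_of_notMem (hmem _ _ ⟨hrν0, hrν1⟩ ⟨zero_le_one, le_refl 1⟩)]
    simp
  · have hβD : β * (2*νs + r + 1/r + 2) = 1 := by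
      rw [hβeq]; field_simp
    have h4 : β / r * (r * νs) = β * νs := by
      field_simp
    rw [integral_P2 r νs β hr0 hν0 hβ0 _ measurable_fst.stronglyMeasurable]
    simp only
    linear_combination h4 + β * hmean + μ * hβD
  · have hβD : β * (2*νs + r + 1/r + 2) = 1 := by
      rw [hβeq]; field_simp
    have h4 : β / r * (r * νs) = β * νs := by
      field_simp
    rw [integral_P2 r νs β hr0 hν0 hβ0 _ measurable_snd.stronglyMeasurable]
    simp only
    linear_combination h4 + β * hmean + μ * hβD

end
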